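/- arXiv:1606.03198 — 3 statements merged into one kernel-verified Lean document; each statement's English description precedes it below -/
import Mathlib

section
/- Any KG (k,d,n)-code is a (≤k,d,n)-locally thin code. That is, if a t×n Boolean matrix M has the property that every k-column submatrix M' admits rows i_1 ≤ ... ≤ i_ℓ and a partition M'_1,...,M'_ℓ of the columns of M' with 1 ≤ |M'_j| ≤ d, such that row i_j of M' has all 1's on the columns of M'_j and all 0's on the columns of M'_{j+1} ∪ ... ∪ M'_ℓ, then every submatrix of s columns of M with d ≤ s ≤ k contains a row whose number of 1-entries is between 1 and d. -/
/-- Hamming weight of row `i` of `M` restricted to the columns in `S`. -/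
def rowWeight {t n : ℕ} (M : Fin t → Fin n → Bool) (i : Fin t) (S : Finset (Fin n)) : ℕ :=
  (S.filter (fun j => M i j = true)).card

/-- `M` is a KG `(k,d,n)`-code. -/
def IsKGCode {t n : ℕ} (k d : ℕ) (M : Fin t → Fin n → Bool) : Prop :=
  ∀ K : Finset (Fin n), K.card = k →
    ∃ (ℓ : ℕ), 0 < ℓ ∧
      ∃ (i : Fin ℓ → Fin t) (P : Fin ℓ → Finset (Fin n)),
        Monotone i ∧
        (∀ j, P j ⊆ K) ∧
        (∀ j j' : Fin ℓ, j ≠ j' → Disjoint (P j) (P j')) ∧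
        (∀ c ∈ K, ∃ j, c ∈ P j) ∧
        (∀ j, 1 ≤ (P j).card ∧ (P j).card ≤ d) ∧
        (∀ j, ∀ c ∈ P j, M (i j) c = true) ∧
        (∀ j j' : Fin ℓ, j < j' → ∀ c ∈ P j', M (i j) c = false)

/-- `M` is a `(≤ k, d, n)`-locally thin code. -/
def IsLocallyThin {t n : ℕ} (k d : ℕ) (M : Fin t → Fin n → Bool) : Prop :=
  ∀ S : Finset (Fin n), d ≤ S.card → S.card ≤ k →
    ∃ i : Fin t, 1 ≤ rowWeight M i S ∧ rowWeight M i S ≤ d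

/-- Any KG `(k,d,n)`-code is a `(≤ k,d,n)`-locally thin code. -/
theorem kg_is_locally_thin {t n k d : ℕ} (hd : 1 ≤ d) (hdk : d ≤ k) (hkn : k ≤ n)
    (M : Fin t → Fin n → Bool) (hKG : IsKGCode k d M) : IsLocallyThin k d M := by
  intro S hdS hSk
  obtain ⟨K, hSK, hKcard⟩ := Finset.exists_superset_card_eq hSk
    (by simpa [Fintype.card_fin] using hkn)
  obtain ⟨ℓ, hℓ, i, P, hmono, hPK, hdisj, hcover, hcard, hone, hzero⟩ := hKG K hKcard
  -- S is nonempty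
  have hSne : S.Nonempty := Finset.card_pos.mp (lt_of_lt_of_le hd hdS)
  -- the set of indices j with P j ∩ S nonempty
  have : ∃ j : Fin ℓ, ((P j) ∩ S).Nonempty := by
    obtain ⟨c, hc⟩ := hSne
    obtain ⟨j, hj⟩ := hcover c (hSK hc)
    exact ⟨j, c, Finset.mem_inter.mpr ⟨hj, hc⟩⟩
  classical
  let T : Finset (Fin ℓ) := Finset.univ.filter (fun j => ((P j) ∩ S).Nonempty)
  have hTne : T.Nonempty := by
    obtain ⟨j, hj⟩ := this
    exact ⟨j, by simp [T, hj]⟩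
  set j₀ := T.min' hTne with hj₀
  have hj₀mem : ((P j₀) ∩ S).Nonempty := by
    have := T.min'_mem hTne
    simpa [T] using this
  refine ⟨i j₀, ?_, ?_⟩
  · have key : S.filter (fun c => M (i j₀) c = true) = P j₀ ∩ S := by
      ext c
      simp only [Finset.mem_filter, Finset.mem_inter]
      constructor
      · rintro ⟨hcS, hcM⟩
        obtain ⟨j, hj⟩ := hcover c (hSK hcS)
        rcases lt_trichotomy j₀ j with h | h | h
        · exact absurd hcM (by simp [hzero j₀ j h c hj])
        · exact ⟨h ▸ hj, hcS⟩
        · have : j₀ ≤ j := T.min'_le j (by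
            simp only [T, Finset.mem_filter, Finset.mem_univ, true_and]
            exact ⟨c, Finset.mem_inter.mpr ⟨hj, hcS⟩⟩)
          exact absurd this (not_le.mpr h)
      · rintro ⟨hcP, hcS⟩
        exact ⟨hcS, hone j₀ c hcP⟩
    rw [rowWeight, key]
    exact Finset.card_pos.mpr hj₀mem
  · have key : S.filter (fun c => M (i j₀) c = true) ⊆ P j₀ := by
      intro c hc
      simp only [Finset.mem_filter] at hc
      obtain ⟨hcS, hcM⟩ := hc
      obtain ⟨j, hj⟩ := hcover c (hSK hcS)
      rcases lt_trichotomy j₀ j with h | h | h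
      · exact absurd hcM (by simp [hzero j₀ j h c hj])
      · exact h ▸ hj
      · have : j₀ ≤ j := T.min'_le j (by
          simp only [T, Finset.mem_filter, Finset.mem_univ, true_and]
          exact ⟨c, Finset.mem_inter.mpr ⟨hj, hcS⟩⟩)
        exact absurd this (not_le.mpr h)
    exact le_trans (Finset.card_le_card key) (hcard j₀).2
end

section
/- If a t×n Boolean matrix is a (k,m,d,n)-selector and at most k stations are active (i.e., at most k columns are 'marked'), then the conflict-resolution protocol it defines leaves at most k − m active stations untransmitted; formally: for any set S of p ≤ k columns of a (k,m,d,n)-selector extended to any k-column superset, at least m − (k − p) columns of S are covered by rows whose restriction to the k-column superset has Hamming weight between 1 and d. -/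
open Finset

/-- `M` is a `(k,m,d,n)`-selector: every `k`-column submatrix contains a set `R` of rows,
each of Hamming weight (restricted to the submatrix) between `1` and `d`, whose Boolean OR
has Hamming weight at least `m`. -/
def IsSelector {t n : ℕ} (k m d : ℕ) (M : Fin t → Fin n → Bool) : Prop :=
  ∀ K : Finset (Fin n), K.card = k →
    ∃ R : Finset (Fin t),
      (∀ i ∈ R, 1 ≤ (K.filter (fun j => M i j = true)).card ∧
        (K.filter (fun j => M i j = true)).card ≤ d) ∧
      m ≤ (K.filter (fun j => ∃ i ∈ R, M i j = true)).card

/-- A `(k,m,d,n)`-selector leaves at most `k − m` active stations untransmitted: for every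
set `S` of at most `k` columns contained in a `k`-column set `K`, there is a set `R` of rows,
each of weight between `1` and `d` on `K`, covering at least `m − (k − |S|)` columns of `S`. -/
theorem selector_covers {t n k m d : ℕ} (hd : 1 ≤ d) (hdm : d ≤ m) (hmk : m ≤ k)
    (hkn : k ≤ n) (M : Fin t → Fin n → Bool) (hM : IsSelector k m d M)
    (K : Finset (Fin n)) (hK : K.card = k) (S : Finset (Fin n)) (hS : S ⊆ K) :
    ∃ R : Finset (Fin t),
      (∀ i ∈ R, 1 ≤ (K.filter (fun j => M i j = true)).card ∧
        (K.filter (fun j => M i j = true)).card ≤ d) ∧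
      m - (k - S.card) ≤ (S.filter (fun j => ∃ i ∈ R, M i j = true)).card := by
  obtain ⟨R, h1, h2⟩ := hM K hK
  refine ⟨R, h1, ?_⟩
  have hsub : K.filter (fun j => ∃ i ∈ R, M i j = true) ⊆
      S.filter (fun j => ∃ i ∈ R, M i j = true) ∪ (K \ S) := by
    intro x hx
    simp only [mem_filter, mem_union, mem_sdiff] at hx ⊢
    by_cases hxS : x ∈ S
    · exact Or.inl ⟨hxS, hx.2⟩
    · exact Or.inr ⟨hx.1, hxS⟩
  have hc := (card_le_card hsub).trans (card_union_le _ _)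
  have hsd : (K \ S).card = k - S.card := by rw [card_sdiff_of_subset hS, hK]
  have hSk : S.card ≤ k := hK ▸ card_le_card hS
  omega
end

section
/- Existence of selectors: for positive integers k, m, d, n with 3 ≤ d ≤ m and 2(m−1) < k ≤ n, there exists a (k,m,d,n)-selector of size t for any integer t with t > ln(C(n,k)·C(k,k−m+1)) / ((d(k−m+1))/(4k) − ln(4/3)), provided (d(k−m+1))/(4k) > ln(4/3). -/
/-!
Take the entries of `M` independent, equal to `1` with probability `p = d/(4k)`. If `M` is not a
selector, some `k`-set `K` of columns has fewer than `m` columns covered by the rows of weight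
between `1` and `d` on `K`, so some `(k-m+1)`-set `S ⊆ K` of uncovered columns is met by no row
of weight `≤ d` on `K`: every row either vanishes on `S` or has more than `d` ones in `K`. For one
row this has probability at most `(1-p)^(k-m+1) + C(k,d+1) p^(d+1) ≤ (4/3)(1-p)^(k-m+1)`, the
rows are independent, and a union bound over the `C(n,k) C(k,k-m+1)` pairs `(K, S)` leaves a
failure probability below `1` for the given `t`. Probabilities are explicit product weights on
the finite set of Boolean matrices.
-/

open Finset

namespace Selector

section UnionBound

variable {β ι : Type*} [Fintype β] {w : β → ℝ}

theorem sum_filter_exists_le (hw : ∀ x, 0 ≤ w x) (I : Finset ι) (B : ι → β → Prop)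
    [∀ i, DecidablePred (B i)] :
    ∑ x with ∃ i ∈ I, B i x, w x ≤ ∑ i ∈ I, ∑ x with B i x, w x := by
  have hterm : ∀ x i, 0 ≤ if B i x then w x else 0 := fun x i => by
    split_ifs
    exacts [hw x, le_rfl]
  simp_rw [sum_filter]
  rw [sum_comm]
  refine sum_le_sum fun x _ => ?_
  split_ifs with h
  · obtain ⟨i, hi, hx⟩ := h
    simpa [hx] using single_le_sum (fun i _ => hterm x i) hi
  · exact sum_nonneg fun i _ => hterm x i

theorem exists_forall_not_of_sum_lt_one (hw : ∀ x, 0 ≤ w x) (hw1 : ∑ x, w x = 1)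
    (I : Finset ι) (B : ι → β → Prop) [∀ i, DecidablePred (B i)]
    (h : ∑ i ∈ I, ∑ x with B i x, w x < 1) : ∃ x, ∀ i ∈ I, ¬ B i x := by
  by_contra! hcover
  have hall : ∑ x with ∃ i ∈ I, B i x, w x = 1 := by
    rw [filter_true_of_mem fun x _ => hcover x, hw1]
  linarith [sum_filter_exists_le hw I B]

theorem sum_prod_filter_forall [Fintype ι] [DecidableEq ι] (w : β → ℝ) (B : β → Prop)
    [DecidablePred B] :
    ∑ M : ι → β with ∀ i, B (M i), ∏ i, w (M i) =
      (∑ r with B r, w r) ^ Fintype.card ι := by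
  have hpi : ({M : ι → β | ∀ i, B (M i)} : Finset _) =
      Fintype.piFinset fun _ => {r | B r} := by
    ext M
    simp
  rw [hpi, ← prod_univ_sum, prod_const, card_univ]

theorem sum_filter_le_add_of_imp_or (hw : ∀ x, 0 ≤ w x) {R P Q : β → Prop} [DecidablePred R]
    [DecidablePred P] [DecidablePred Q] (h : ∀ x, R x → P x ∨ Q x) :
    ∑ x with R x, w x ≤ ∑ x with P x, w x + ∑ x with Q x, w x := by
  simp_rw [sum_filter, ← sum_add_distrib]
  refine sum_le_sum fun x _ => ?_
  have hx := h x
  by_cases hR : R x <;> by_cases hP : P x <;> by_cases hQ : Q x <;> simp_all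

end UnionBound

section Bernoulli

variable {α : Type*} [Fintype α] {p : ℝ}

noncomputable def bernoulliWeight (p : ℝ) (r : α → Bool) : ℝ :=
  ∏ j, if r j then p else 1 - p

theorem bernoulliWeight_nonneg (hp0 : 0 ≤ p) (hp1 : p ≤ 1) (r : α → Bool) :
    0 ≤ bernoulliWeight p r :=
  prod_nonneg fun j _ => by split_ifs <;> linarith

theorem sum_bernoulliWeight_filter_forall_eq [DecidableEq α] (p : ℝ) (S : Finset α) (b : Bool) :
    ∑ r with ∀ j ∈ S, r j = b, bernoulliWeight p r = (if b then p else 1 - p) ^ #S := by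
  have hpi : ({r : α → Bool | ∀ j ∈ S, r j = b} : Finset _) =
      Fintype.piFinset fun j => if j ∈ S then {b} else univ := by
    ext r
    simp only [mem_filter, mem_univ, true_and, Fintype.mem_piFinset]
    refine ⟨fun h j => ?_, fun h j hj => by simpa [hj] using h j⟩
    split_ifs with hj <;> simp [h j, hj]
  have hfactor : ∀ j, ∑ x ∈ (if j ∈ S then {b} else univ), (if x then p else 1 - p) =
      if j ∈ S then (if b then p else 1 - p) else 1 := fun j => by
    by_cases hj : j ∈ S <;> simp [hj]
  unfold bernoulliWeight
  rw [hpi, ← prod_univ_sum (fun j => if j ∈ S then ({b} : Finset Bool) else univ)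
    (fun _ x => if x = true then p else 1 - p), prod_congr rfl fun j _ => hfactor j,
    prod_ite_mem, univ_inter, prod_const]

theorem sum_bernoulliWeight [DecidableEq α] (p : ℝ) :
    ∑ r : α → Bool, bernoulliWeight p r = 1 := by
  simpa using sum_bernoulliWeight_filter_forall_eq (α := α) p ∅ false

theorem sum_bernoulliWeight_filter_le_card_le [DecidableEq α] (hp0 : 0 ≤ p) (hp1 : p ≤ 1)
    (K : Finset α) (c : ℕ) :
    ∑ r with c ≤ #{j ∈ K | r j = true}, bernoulliWeight p r ≤ (#K).choose c * p ^ c := by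
  have hsub : ({r | c ≤ #{j ∈ K | r j = true}} : Finset (α → Bool)) ⊆
      ({r | ∃ T ∈ K.powersetCard c, ∀ j ∈ T, r j = true} : Finset (α → Bool)) := by
    intro r hr
    obtain ⟨T, hT, hTc⟩ := exists_subset_card_eq (mem_filter.1 hr).2
    simp only [mem_filter, mem_univ, true_and, mem_powersetCard, subset_iff] at hT ⊢
    exact ⟨T, ⟨fun j hj => (hT hj).1, hTc⟩, fun j hj => (hT hj).2⟩
  calc ∑ r with c ≤ #{j ∈ K | r j = true}, bernoulliWeight p r
      ≤ ∑ r with ∃ T ∈ K.powersetCard c, ∀ j ∈ T, r j = true, bernoulliWeight p r :=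
        sum_le_sum_of_subset_of_nonneg hsub fun r _ _ => bernoulliWeight_nonneg hp0 hp1 r
    _ ≤ ∑ T ∈ K.powersetCard c, ∑ r with ∀ j ∈ T, r j = true, bernoulliWeight p r :=
        sum_filter_exists_le (bernoulliWeight_nonneg hp0 hp1) _ _
    _ = (#K).choose c * p ^ c := by
        rw [sum_congr rfl fun T hT => by
          rw [sum_bernoulliWeight_filter_forall_eq, if_pos rfl, (mem_powersetCard.1 hT).2],
          sum_const, card_powersetCard, nsmul_eq_mul]

end Bernoulli

theorem exp_neg_five_fourths_mul_le_one_sub {p : ℝ} (hp0 : 0 ≤ p) (hp : p ≤ 1 / 5) :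
    Real.exp (-(5 / 4 * p)) ≤ 1 - p := by
  -- `e^(-x) ≤ 1/(1 + x)`, and `(1 - p)(1 + 5p/4) ≥ 1` exactly when `0 ≤ p ≤ 1/5`.
  have h1 := Real.add_one_le_exp (5 / 4 * p)
  have h2 : Real.exp (-(5 / 4 * p)) * Real.exp (5 / 4 * p) = 1 := by
    rw [← Real.exp_add]; simp
  nlinarith [Real.exp_pos (-(5 / 4 * p))]

theorem exp_div_four_pow_succ_le (d : ℕ) :
    Real.exp d / 4 ^ (d + 1) ≤ Real.exp (-(5 / 16 * d)) / 3 := by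
  have hlog : (21 / 16 : ℝ) ≤ Real.log 4 := by
    rw [show (4 : ℝ) = 2 ^ 2 by norm_num, Real.log_pow]
    have := Real.log_two_gt_d9
    push_cast
    linarith
  have h4 : Real.exp (21 / 16) ^ d ≤ 4 ^ d :=
    pow_le_pow_left₀ (Real.exp_pos _).le
      ((Real.exp_le_exp.2 hlog).trans_eq (Real.exp_log (by norm_num))) d
  have hsplit : Real.exp d = Real.exp (21 / 16) ^ d * Real.exp (-(5 / 16 * d)) := by
    rw [← Real.exp_nat_mul, ← Real.exp_add]
    ring_nf
  rw [hsplit, div_le_div_iff₀ (by positivity) (by norm_num), pow_succ]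
  nlinarith [Real.exp_pos (-(5 / 16 * d)), pow_pos (show (0 : ℝ) < 4 by norm_num) d]

theorem choose_mul_pow_le_one_sub_pow (k d : ℕ) (h : 5 * d ≤ 4 * k) :
    k.choose (d + 1) * ((d : ℝ) / (4 * k)) ^ (d + 1) ≤ (1 - (d : ℝ) / (4 * k)) ^ k / 3 := by
  rcases Nat.eq_zero_or_pos k with rfl | hk
  · simp
  set p : ℝ := d / (4 * k)
  have hkR : (0 : ℝ) < k := by exact_mod_cast hk
  have hkp : (k : ℝ) * p = d / 4 := by
    simp only [p]; field_simp
  have hp0 : 0 ≤ p := by positivity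
  have hp5 : p ≤ 1 / 5 := by
    rw [div_le_div_iff₀ (by positivity) (by norm_num)]
    exact_mod_cast (by omega : d * 5 ≤ 1 * (4 * k))
  calc k.choose (d + 1) * p ^ (d + 1)
      ≤ k ^ (d + 1) / (d + 1).factorial * p ^ (d + 1) := by
        gcongr; exact Nat.choose_le_pow_div _ _
    _ = d ^ (d + 1) / (d + 1).factorial / 4 ^ (d + 1) := by
        rw [div_mul_eq_mul_div, ← mul_pow, hkp, div_pow]; ring
    _ ≤ Real.exp d / 4 ^ (d + 1) := by
        gcongr; exact Real.pow_div_factorial_le_exp _ (Nat.cast_nonneg d) _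
    _ ≤ Real.exp (-(5 / 16 * d)) / 3 := exp_div_four_pow_succ_le d
    _ = Real.exp (-(5 / 4 * p)) ^ k / 3 := by
        rw [← Real.exp_nat_mul]; congr 2; linear_combination (5 / 4) * hkp
    _ ≤ (1 - p) ^ k / 3 := by
        gcongr; exact exp_neg_five_fourths_mul_le_one_sub hp0 hp5

theorem mul_exp_neg_pow_lt_one {C β : ℝ} {t : ℕ} (hC : 0 ≤ C) (hβ : 0 < β)
    (ht : Real.log C / β < t) : C * Real.exp (-β) ^ t < 1 := by
  rcases hC.eq_or_lt with rfl | hC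
  · simp
  have hCt : C < Real.exp (t * β) :=
    (Real.log_lt_iff_lt_exp hC).1 (by rwa [div_lt_iff₀ hβ] at ht)
  rw [← Real.exp_nat_mul, mul_neg, Real.exp_neg, ← div_eq_mul_inv]
  exact (div_lt_one (Real.exp_pos _)).2 hCt

section RowFails

variable {α : Type*}

-- A row that cannot contribute a column of `S` to the set covered by rows of weight `≤ d` on `K`.
def RowFails (d : ℕ) (K S : Finset α) (r : α → Bool) : Prop :=
  (∀ j ∈ S, r j = false) ∨ d < #{j ∈ K | r j = true}

instance (d : ℕ) (K S : Finset α) : DecidablePred (RowFails d K S) :=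
  fun _ => inferInstanceAs (Decidable (_ ∨ _))

theorem sum_bernoulliWeight_rowFails_le [Fintype α] [DecidableEq α] {d k : ℕ}
    {K S : Finset α} (hK : #K = k) (h5 : 5 * d ≤ 4 * k) (hSK : #S ≤ k) :
    ∑ r with RowFails d K S r, bernoulliWeight ((d : ℝ) / (4 * k)) r ≤
      4 / 3 * (1 - (d : ℝ) / (4 * k)) ^ #S := by
  set p : ℝ := d / (4 * k)
  have hp0 : 0 ≤ p := by positivity
  have hp1 : p ≤ 1 := by
    rcases k.eq_zero_or_pos with hk | hk
    · simp [p, hk]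
    exact div_le_one_of_le₀ (by exact_mod_cast (by omega : d ≤ 4 * k)) (by positivity)
  calc ∑ r with RowFails d K S r, bernoulliWeight p r
      ≤ ∑ r with ∀ j ∈ S, r j = false, bernoulliWeight p r +
          ∑ r with d + 1 ≤ #{j ∈ K | r j = true}, bernoulliWeight p r :=
        sum_filter_le_add_of_imp_or (bernoulliWeight_nonneg hp0 hp1) fun _ => id
    _ ≤ (1 - p) ^ #S + k.choose (d + 1) * p ^ (d + 1) := by
        rw [sum_bernoulliWeight_filter_forall_eq, if_neg Bool.false_ne_true, ← hK]
        gcongr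
        exact sum_bernoulliWeight_filter_le_card_le hp0 hp1 K (d + 1)
    _ ≤ (1 - p) ^ #S + (1 - p) ^ #S / 3 := by
        gcongr
        calc k.choose (d + 1) * p ^ (d + 1) ≤ (1 - p) ^ k / 3 :=
              choose_mul_pow_le_one_sub_pow _ d h5
          _ ≤ (1 - p) ^ #S / 3 := by
              gcongr ?_ / 3
              exact pow_le_pow_of_le_one (by linarith) (by linarith) hSK
    _ = 4 / 3 * (1 - p) ^ #S := by ring

end RowFails

theorem isSelector_of_forall_exists_not_rowFails {t n k m d : ℕ} (hmk : m ≤ k)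
    (M : Fin t → Fin n → Bool)
    (h : ∀ K : Finset (Fin n), #K = k → ∀ S ⊆ K, #S = k - m + 1 →
      ∃ i, ¬ RowFails d K S (M i)) :
    IsSelector k m d M := by
  intro K hK
  set R : Finset (Fin t) :=
    {i | 1 ≤ #{j ∈ K | M i j = true} ∧ #{j ∈ K | M i j = true} ≤ d}
  refine ⟨R, fun i hi => (mem_filter.1 hi).2, ?_⟩
  by_contra! hlt
  set C := {j ∈ K | ∃ i ∈ R, M i j = true}
  have hCK : C ⊆ K := filter_subset _ _
  have hfree : k - m + 1 ≤ #(K \ C) := by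
    rw [card_sdiff_of_subset hCK, hK]
    have := card_le_card hCK
    omega
  obtain ⟨S, hS, hSc⟩ := exists_subset_card_eq hfree
  obtain ⟨i, hi⟩ := h K hK S (hS.trans sdiff_subset) hSc
  simp only [RowFails, not_or, not_forall, not_lt] at hi
  obtain ⟨⟨j, hjS, hj⟩, hid⟩ := hi
  have hij : M i j = true := by simpa using hj
  obtain ⟨hjK, hjC⟩ := mem_sdiff.1 (hS hjS)
  have hiR : i ∈ R :=
    mem_filter.2 ⟨mem_univ _, card_pos.2 ⟨j, mem_filter.2 ⟨hjK, hij⟩⟩, hid⟩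
  exact hjC (mem_filter.2 ⟨hjK, i, hiR, hij⟩)

theorem card_sigma_powersetCard {α : Type*} [Fintype α] (k a : ℕ) :
    #((powersetCard k (univ : Finset α)).sigma fun K => K.powersetCard a) =
      (Fintype.card α).choose k * k.choose a := by
  rw [card_sigma, sum_congr rfl fun K hK => by rw [card_powersetCard, (mem_powersetCard.1 hK).2],
    sum_const, card_powersetCard, card_univ, smul_eq_mul]

theorem exists_isSelector_of_sum_rowFails_le {t n k m d : ℕ} (hmk : m ≤ k) {p q : ℝ}
    (hp0 : 0 ≤ p) (hp1 : p ≤ 1)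
    (hq : ∀ K S : Finset (Fin n), #K = k → S ⊆ K → #S = k - m + 1 →
      ∑ r with RowFails d K S r, bernoulliWeight p r ≤ q)
    (hunion : (n.choose k : ℝ) * k.choose (k - m + 1) * q ^ t < 1) :
    ∃ M : Fin t → Fin n → Bool, IsSelector k m d M := by
  set I := (powersetCard k (univ : Finset (Fin n))).sigma fun K => K.powersetCard (k - m + 1)
  set w : (Fin t → Fin n → Bool) → ℝ := fun M => ∏ i, bernoulliWeight p (M i)
  have hw0 : ∀ M, 0 ≤ w M := fun M => prod_nonneg fun i _ => bernoulliWeight_nonneg hp0 hp1 _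
  have hw1 : ∑ M, w M = 1 := by
    simp only [w]
    rw [← Fintype.prod_sum]
    simp [sum_bernoulliWeight]
  have hbad : ∀ x ∈ I, ∑ M with ∀ i, RowFails d x.1 x.2 (M i), w M ≤ q ^ t := by
    rintro ⟨K, S⟩ hKS
    simp only [I, mem_sigma, mem_powersetCard] at hKS
    obtain ⟨⟨-, hK⟩, hSK, hS⟩ := hKS
    calc ∑ M with ∀ i, RowFails d K S (M i), w M
        = (∑ r with RowFails d K S r, bernoulliWeight p r) ^ t := by
          convert sum_prod_filter_forall (ι := Fin t) (bernoulliWeight p) (RowFails d K S) using 3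
          simp
      _ ≤ q ^ t :=
          pow_le_pow_left₀ (sum_nonneg fun r _ => bernoulliWeight_nonneg hp0 hp1 r)
            (hq K S hK hSK hS) t
  have hsum : ∑ x ∈ I, ∑ M with ∀ i, RowFails d x.1 x.2 (M i), w M < 1 := by
    refine (sum_le_card_nsmul I _ _ hbad).trans_lt ?_
    rwa [nsmul_eq_mul, card_sigma_powersetCard, Fintype.card_fin, Nat.cast_mul]
  obtain ⟨M, hM⟩ := exists_forall_not_of_sum_lt_one hw0 hw1 I _ hsum
  refine ⟨M, isSelector_of_forall_exists_not_rowFails hmk M fun K hK S hSK hS => ?_⟩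
  simpa using hM ⟨K, S⟩ (mem_sigma.2 ⟨mem_powersetCard.2 ⟨subset_univ K, hK⟩,
    mem_powersetCard.2 ⟨hSK, hS⟩⟩)

end Selector

open Selector in
theorem selector_exists_general (k m d n t : ℕ) (hd : 3 ≤ d) (hdm : d ≤ m)
    (hmk : 2 * (m - 1) < k)
    (hgap : Real.log (4 / 3) < (d : ℝ) * ((k : ℝ) - (m : ℝ) + 1) / (4 * (k : ℝ)))
    (ht : Real.log ((Nat.choose n k : ℝ) * (Nat.choose k (k - m + 1) : ℝ)) /
        ((d : ℝ) * ((k : ℝ) - (m : ℝ) + 1) / (4 * (k : ℝ)) - Real.log (4 / 3)) < (t : ℝ)) :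
    ∃ M : Fin t → Fin n → Bool, IsSelector k m d M := by
  set a := k - m + 1
  set p : ℝ := d / (4 * k)
  have h5 : 5 * d ≤ 4 * k := by omega
  have hpa : p * a = d * ((k : ℝ) - m + 1) / (4 * k) := by
    simp only [p, a]
    push_cast [show m ≤ k by omega]
    ring
  have hp1 : p ≤ 1 :=
    div_le_one_of_le₀ (by exact_mod_cast (by omega : d ≤ 4 * k)) (by positivity)
  rw [← hpa] at hgap ht
  refine exists_isSelector_of_sum_rowFails_le (p := p)
    (q := Real.exp (-(p * a - Real.log (4 / 3)))) (by omega) (by positivity) hp1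
    (fun K S hK hSK hS => ?_)
    (mul_exp_neg_pow_lt_one (by positivity) (by linarith) ht)
  calc ∑ r with RowFails d K S r, bernoulliWeight p r ≤ 4 / 3 * (1 - p) ^ a :=
        (sum_bernoulliWeight_rowFails_le hK h5 (hK ▸ card_le_card hSK)).trans_eq
          (by rw [hS])
    _ ≤ 4 / 3 * Real.exp (-p) ^ a := by
        gcongr
        exact Real.one_sub_le_exp_neg p
    _ = Real.exp (-(p * a - Real.log (4 / 3))) := by
        rw [neg_sub, Real.exp_sub, Real.exp_log (by norm_num), ← Real.exp_nat_mul, mul_neg,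
          Real.exp_neg, mul_comm (a : ℝ)]
        ring

/-- Existence of `(k,m,d,n)`-selectors: for `3 ≤ d ≤ m`, `2(m−1) < k ≤ n`, provided
`d(k−m+1)/(4k) > ln(4/3)`, there is a `(k,m,d,n)`-selector of size `t` for every integer
`t > ln(C(n,k)·C(k,k−m+1)) / (d(k−m+1)/(4k) − ln(4/3))`. -/
theorem selector_exists (k m d n t : ℕ) (hd : 3 ≤ d) (hdm : d ≤ m)
    (hmk : 2 * (m - 1) < k) (hkn : k ≤ n)
    (hgap : Real.log (4 / 3) < (d : ℝ) * ((k : ℝ) - (m : ℝ) + 1) / (4 * (k : ℝ)))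
    (ht : Real.log ((Nat.choose n k : ℝ) * (Nat.choose k (k - m + 1) : ℝ)) /
        ((d : ℝ) * ((k : ℝ) - (m : ℝ) + 1) / (4 * (k : ℝ)) - Real.log (4 / 3)) < (t : ℝ)) :
    ∃ M : Fin t → Fin n → Bool, IsSelector k m d M :=
  selector_exists_general k m d n t hd hdm hmk hgap ht
end
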